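/- Let G = (V, E) be a quasi-acyclic 2-path-bounded oriented graph without loops, multiple edges and triangles. Then for any edge e ∈ E there exists a 3-vanishing commutative diagram D = (G, l) with values in a ring R (viewed as a multiplicative monoid) such that l(e) ≠ 0 and l(e') = 0 for every edge e' ≠ e. -/

import Mathlib

/-- An oriented graph: finite nonempty sets of vertices and edges with
origin and tail maps. -/
structure OrientedGraph where
  V : Type
  E : Type
  [fintypeV : Fintype V]
  [fintypeE : Fintype E]
  [nonemptyV : Nonempty V]
  [nonemptyE : Nonempty E]
  o : E → V
  t : E → V

attribute [instance] OrientedGraph.fintypeV OrientedGraph.fintypeE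
  OrientedGraph.nonemptyV OrientedGraph.nonemptyE

namespace OrientedGraph

variable (G : OrientedGraph)

/-- `G.IsPath p u v` : the edge sequence `p` is a path from `u` to `v`
(consecutive edges are composable; paths of length 0 at any vertex are allowed). -/
def IsPath (p : List G.E) (u v : G.V) : Prop :=
  List.Chain' (fun e f => G.t e = G.o f) p ∧
  ((p = [] ∧ u = v) ∨
    ∃ h : p ≠ [], u = G.o (p.head h) ∧ v = G.t (p.getLast h))

/-- The label of an edge sequence: the product of the labels of its edges
(the empty sequence maps to `1`). -/
def labelProd {M : Type} [Monoid M] (l : G.E → M) (s : List G.E) : M :=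
  (s.map l).prod

/-- The diagram `(G, l)` is commutative: any two paths with the same origin and
the same tail have equal labels. -/
def IsCommutative {M : Type} [Monoid M] (l : G.E → M) : Prop :=
  ∀ (u v : G.V) (p₁ p₂ : List G.E),
    G.IsPath p₁ u v → G.IsPath p₂ u v → G.labelProd l p₁ = G.labelProd l p₂

/-- A complete system of relations for `G`: for every monoid `M` and every
labeling `l : E → M`, the diagram `(G, l)` is commutative iff all relations hold. -/
def IsComplete (R : Finset (List G.E × List G.E)) : Prop :=
  ∀ (M : Type) [Monoid M], ∀ l : G.E → M,
    G.IsCommutative l ↔ ∀ r ∈ R, G.labelProd l r.1 = G.labelProd l r.2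

/-- A minimal complete system of relations: no proper subset is complete. -/
def IsMinimalComplete (R : Finset (List G.E × List G.E)) : Prop :=
  G.IsComplete R ∧ ∀ R' : Finset (List G.E × List G.E), R' ⊂ R → ¬ G.IsComplete R'

/-- The commutativity rank `η(G)`: the minimal cardinality of a complete
system of relations for `G`. -/
noncomputable def eta : ℕ :=
  sInf {n : ℕ | ∃ R : Finset (List G.E × List G.E), G.IsComplete R ∧ R.card = n}

/-- `S'` is obtained from `S` by one multiplication. -/
def MulStep (S S' : Set (List G.E)) : Prop :=
  ∃ s ∈ S, ∃ s' ∈ S, S' = S ∪ {s ++ s'}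

/-- `G.mCost S S'` : the minimal number of multiplications needed to obtain `S'`
from `S` (`⊤` if impossible). -/
noncomputable def mCost (S S' : Set (List G.E)) : ℕ∞ :=
  sInf {k : ℕ∞ | ∃ n : ℕ, k = n ∧ ∃ f : ℕ → Set (List G.E),
    f 0 = S ∧ f n = S' ∧ ∀ i < n, G.MulStep (f i) (f (i + 1))}

/-- `S_R`: the set of all edge sequences appearing in the relations of `R`. -/
def relSet (R : Finset (List G.E × List G.E)) : Set (List G.E) :=
  {s | ∃ r ∈ R, s = r.1 ∨ s = r.2}

/-- `ℰ`: the empty sequence together with all one-edge sequences. -/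
def baseSet : Set (List G.E) :=
  {s | s = [] ∨ ∃ e : G.E, s = [e]}

/-- `m(R)`: the minimal number of multiplications needed to build all sequences
appearing in `R`, starting from `ℰ`. -/
noncomputable def mRel (R : Finset (List G.E × List G.E)) : ℕ∞ :=
  sInf {k : ℕ∞ | ∃ S : Set (List G.E), G.relSet R ⊆ S ∧ k = G.mCost G.baseSet S}

/-- The multiplication rank `ν(G)`. -/
noncomputable def nu : ℕ∞ :=
  sInf {k : ℕ∞ | ∃ R : Finset (List G.E × List G.E), G.IsComplete R ∧ k = G.mRel R}

/-- A 4-tuple of edges `(a, b, c, d)` forms a rhomboid. -/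
def IsRhomboid (r : G.E × G.E × G.E × G.E) : Prop :=
  G.o r.1 = G.o r.2.2.1 ∧ G.t r.2.1 = G.t r.2.2.2 ∧
  G.t r.1 = G.o r.2.1 ∧ G.t r.2.2.1 = G.o r.2.2.2 ∧
  G.o r.1 ≠ G.t r.1 ∧ G.o r.1 ≠ G.o r.2.2.2 ∧ G.o r.1 ≠ G.t r.2.2.2 ∧
  G.t r.1 ≠ G.o r.2.2.2 ∧ G.t r.1 ≠ G.t r.2.2.2 ∧ G.o r.2.2.2 ≠ G.t r.2.2.2

/-- Two rhomboids `(a, b, c, d)` and `(a', b', c', d')` are disjoint. -/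
def RhDisjoint (r r' : G.E × G.E × G.E × G.E) : Prop :=
  (r.1 ≠ r'.1 ∨ r.2.1 ≠ r'.2.1) ∧
  (r.1 ≠ r'.2.2.1 ∨ r.2.1 ≠ r'.2.2.2) ∧
  (r.2.2.1 ≠ r'.2.2.1 ∨ r.2.2.2 ≠ r'.2.2.2) ∧
  (r.2.2.1 ≠ r'.1 ∨ r.2.2.2 ≠ r'.2.1)

/-- `𝔯𝔥(G)`: the maximal cardinality of a family of pairwise disjoint rhomboids in `G`. -/
noncomputable def rhNum : ℕ :=
  sSup {n : ℕ | ∃ F : Finset (G.E × G.E × G.E × G.E),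
    (∀ r ∈ F, G.IsRhomboid r) ∧
    (∀ r ∈ F, ∀ r' ∈ F, r ≠ r' → G.RhDisjoint r r') ∧ F.card = n}

/-- `𝔏(G)`: the number of loops of `G`. -/
noncomputable def loopCount : ℕ :=
  Nat.card {e : G.E // G.o e = G.t e}

/-- `G` is quasi-acyclic: no directed cycle visiting two or more distinct vertices. -/
def QuasiAcyclic : Prop :=
  ∀ u v : G.V, u ≠ v →
    ∀ p q : List G.E, G.IsPath p u v → G.IsPath q v u → False

/-- `G` is 2-path-bounded: every oriented path avoiding loop edges has length at most 2. -/
def TwoPathBounded : Prop :=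
  ∀ (p : List G.E) (u v : G.V), G.IsPath p u v →
    (∀ e ∈ p, G.o e ≠ G.t e) → p.length ≤ 2

/-- `G` has a pair of multiple edges. -/
def HasMultipleEdges : Prop :=
  ∃ e e' : G.E, e ≠ e' ∧ G.t e = G.t e' ∧ G.o e = G.o e' ∧ G.t e ≠ G.o e

/-- `G` has a triangle. -/
def HasTriangle : Prop :=
  ∃ a b c : G.E, G.o a = G.o b ∧ G.t b = G.o c ∧ G.t c = G.t a ∧
    G.o a ≠ G.t a ∧ G.o b ≠ G.t b ∧ G.o c ≠ G.t c

/-- `G` has no loops. -/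
def NoLoops : Prop := ∀ e : G.E, G.o e ≠ G.t e

/-- Every edge occurring on either side of the relation `r` is a loop. -/
def AllLoops (r : List G.E × List G.E) : Prop :=
  (∀ e ∈ r.1, G.o e = G.t e) ∧ (∀ e ∈ r.2, G.o e = G.t e)

/-- Both sides of the relation `r` contain at least one non-loop edge. -/
def BothSidesNonLoop (r : List G.E × List G.E) : Prop :=
  (∃ e ∈ r.1, G.o e ≠ G.t e) ∧ (∃ e ∈ r.2, G.o e ≠ G.t e)

end OrientedGraph

/-- The triploid `T(n₁, n₂, n₃, n₀, e)`. -/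
def Triploid (n₁ n₂ n₃ n₀ e : ℕ) (hn₁ : 0 < n₁) (he : n₂ * (n₁ + n₃) ≤ e)
    (he₀ : 0 < e) : OrientedGraph where
  V := Fin n₀ ⊕ Fin n₁ ⊕ Fin n₂ ⊕ Fin n₃
  E := (Fin n₁ × Fin n₂) ⊕ (Fin n₂ × Fin n₃) ⊕ Fin (e - n₂ * (n₁ + n₃))
  nonemptyV := ⟨Sum.inr (Sum.inl ⟨0, hn₁⟩)⟩
  nonemptyE := by
    by_cases h : n₂ * (n₁ + n₃) < e
    · exact ⟨Sum.inr (Sum.inr ⟨0, by omega⟩)⟩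
    · have h2 : 0 < n₂ := by
        rcases Nat.eq_zero_or_pos n₂ with h0 | h0
        · exfalso; subst h0; simp at h; omega
        · exact h0
      exact ⟨Sum.inl (⟨0, hn₁⟩, ⟨0, h2⟩)⟩
  o := Sum.elim (fun p => Sum.inr (Sum.inl p.1))
        (Sum.elim (fun p => Sum.inr (Sum.inr (Sum.inl p.1)))
          (fun _ => Sum.inr (Sum.inl ⟨0, hn₁⟩)))
  t := Sum.elim (fun p => Sum.inr (Sum.inr (Sum.inl p.2)))
        (Sum.elim (fun p => Sum.inr (Sum.inr (Sum.inr p.2)))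
          (fun _ => Sum.inr (Sum.inl ⟨0, hn₁⟩)))

/-!
In such a graph two distinct paths with the same ends both have length two: a path
of length zero against a nonempty one would close a cycle, two parallel edges or an
edge against a path of length two are excluded, and no path is longer than two.
A path of length two in a loopless graph passes through two distinct edges, so a
labeling supported on a single edge kills it. Taking `l e = 2` in `ZMod 8` then gives
a commutative diagram that is 3-vanishing since `2 ^ 3 = 0`.
-/

namespace OrientedGraph

variable {G : OrientedGraph}

lemma isPath_iff {p : List G.E} {u v : G.V} :
    G.IsPath p u v ↔ p.IsChain (fun e f => G.t e = G.o f) ∧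
      ((p = [] ∧ u = v) ∨ ∃ h : p ≠ [], u = G.o (p.head h) ∧ v = G.t (p.getLast h)) :=
  Iff.rfl

lemma isPath_nil_iff {u v : G.V} : G.IsPath [] u v ↔ u = v := by
  simp [isPath_iff]

lemma isPath_singleton_iff {a : G.E} {u v : G.V} :
    G.IsPath [a] u v ↔ u = G.o a ∧ v = G.t a := by
  simp [isPath_iff]

lemma isPath_pair_iff {a b : G.E} {u v : G.V} :
    G.IsPath [a, b] u v ↔ G.t a = G.o b ∧ u = G.o a ∧ v = G.t b := by
  simp [isPath_iff]

lemma IsPath.length_le_two (hnl : G.NoLoops) (hpb : G.TwoPathBounded) {p : List G.E}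
    {u v : G.V} (hp : G.IsPath p u v) : p.length ≤ 2 :=
  hpb p u v hp fun f _ => hnl f

lemma eq_nil_of_isPath_self (hnl : G.NoLoops) (hqa : G.QuasiAcyclic) (hpb : G.TwoPathBounded)
    {p : List G.E} {u : G.V} (hp : G.IsPath p u u) : p = [] := by
  match p, hp.length_le_two hnl hpb with
  | [], _ => rfl
  | [a], _ =>
    rw [isPath_singleton_iff] at hp
    exact absurd (hp.1.symm.trans hp.2) (hnl a)
  | [a, b], _ =>
    rw [isPath_pair_iff] at hp
    obtain ⟨hab, rfl, hb⟩ := hp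
    exact (hqa _ _ (hnl a) [a] [b] (isPath_singleton_iff.2 ⟨rfl, rfl⟩)
      (isPath_singleton_iff.2 ⟨hab, hb⟩)).elim

lemma eq_of_isPath_singleton (hnl : G.NoLoops) (hme : ¬ G.HasMultipleEdges) {a b : G.E}
    {u v : G.V} (ha : G.IsPath [a] u v) (hb : G.IsPath [b] u v) : a = b := by
  rw [isPath_singleton_iff] at ha hb
  by_contra hab
  exact hme ⟨a, b, hab, ha.2.symm.trans hb.2, ha.1.symm.trans hb.1, (hnl a).symm⟩

lemma not_isPath_singleton_of_isPath_pair (hnl : G.NoLoops) (htr : ¬ G.HasTriangle)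
    {a b c : G.E} {u v : G.V} (ha : G.IsPath [a] u v) (hbc : G.IsPath [b, c] u v) : False := by
  rw [isPath_singleton_iff] at ha
  rw [isPath_pair_iff] at hbc
  exact htr ⟨a, b, c, ha.1.symm.trans hbc.2.1, hbc.1, hbc.2.2.symm.trans ha.2,
    hnl a, hnl b, hnl c⟩

lemma IsPath.eq_or_length_eq_two (hnl : G.NoLoops) (hqa : G.QuasiAcyclic)
    (hpb : G.TwoPathBounded) (hme : ¬ G.HasMultipleEdges) (htr : ¬ G.HasTriangle)
    {p q : List G.E} {u v : G.V} (hp : G.IsPath p u v) (hq : G.IsPath q u v) :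
    p = q ∨ p.length = 2 ∧ q.length = 2 := by
  by_cases huv : u = v
  · subst huv
    exact .inl ((eq_nil_of_isPath_self hnl hqa hpb hp).trans
      (eq_nil_of_isPath_self hnl hqa hpb hq).symm)
  match p, q, hp.length_le_two hnl hpb, hq.length_le_two hnl hpb with
  | [], _, _, _ => exact absurd (isPath_nil_iff.1 hp) huv
  | _, [], _, _ => exact absurd (isPath_nil_iff.1 hq) huv
  | [a], [b], _, _ => exact .inl (by rw [eq_of_isPath_singleton hnl hme hp hq])
  | [_], [_, _], _, _ => exact (not_isPath_singleton_of_isPath_pair hnl htr hp hq).elim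
  | [_, _], [_], _, _ => exact (not_isPath_singleton_of_isPath_pair hnl htr hq hp).elim
  | [_, _], [_, _], _, _ => exact .inr ⟨rfl, rfl⟩

lemma labelProd_eq_zero_of_two_le_length {M : Type} [MonoidWithZero M] (hnl : G.NoLoops)
    {l : G.E → M} {e : G.E} (hl : ∀ f, f ≠ e → l f = 0) {p : List G.E} {u v : G.V}
    (hp : G.IsPath p u v) (hlen : 2 ≤ p.length) : G.labelProd l p = 0 := by
  obtain ⟨a, b, r, rfl⟩ : ∃ a b r, p = a :: b :: r := by
    match p, hlen with
    | a :: b :: r, _ => exact ⟨a, b, r, rfl⟩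
  have hab : a ≠ b := by
    rintro rfl
    exact hnl a (List.isChain_cons_cons.1 (isPath_iff.1 hp).1).1.symm
  apply List.prod_eq_zero
  by_cases ha : a = e
  · exact List.mem_map.2 ⟨b, by simp, hl b (ha ▸ hab.symm)⟩
  · exact List.mem_map.2 ⟨a, by simp, hl a ha⟩

lemma isCommutative_of_label_eq_zero_of_ne {M : Type} [MonoidWithZero M] (hnl : G.NoLoops)
    (hqa : G.QuasiAcyclic) (hpb : G.TwoPathBounded) (hme : ¬ G.HasMultipleEdges)
    (htr : ¬ G.HasTriangle) {l : G.E → M} {e : G.E} (hl : ∀ f, f ≠ e → l f = 0) :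
    G.IsCommutative l := by
  intro u v p q hp hq
  obtain rfl | ⟨hp2, hq2⟩ := hp.eq_or_length_eq_two hnl hqa hpb hme htr hq
  · rfl
  rw [labelProd_eq_zero_of_two_le_length hnl hl hp hp2.ge,
    labelProd_eq_zero_of_two_le_length hnl hl hq hq2.ge]

end OrientedGraph

/-- Theorem: for a quasi-acyclic, 2-path-bounded graph without loops, multiple edges
and triangles, and any edge `e`, there is a 3-vanishing commutative diagram with values
in a ring such that `l(e) ≠ 0` and `l(e') = 0` for every other edge. -/
theorem exists_three_vanishing_single_edge (G : OrientedGraph) (hnl : G.NoLoops) (hqa : G.QuasiAcyclic)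
    (hpb : G.TwoPathBounded) (hme : ¬ G.HasMultipleEdges) (htr : ¬ G.HasTriangle)
    (e : G.E) :
    ∃ (R : Type) (_ : Ring R) (l : G.E → R),
      G.IsCommutative l ∧
      (∀ e₁ e₂ e₃ : G.E, l e₁ * l e₂ * l e₃ = 0) ∧
      l e ≠ 0 ∧ ∀ e' : G.E, e' ≠ e → l e' = 0 := by
  classical
  let l : G.E → ZMod 8 := fun f => if f = e then 2 else 0
  have hl : ∀ f, f ≠ e → l f = 0 := fun f hf => if_neg hf
  refine ⟨ZMod 8, inferInstance, l, G.isCommutative_of_label_eq_zero_of_ne hnl hqa hpb hme htr hl,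
    fun e₁ e₂ e₃ => ?_, by simp only [l, if_pos rfl]; decide, hl⟩
  simp only [l]
  split_ifs <;> decide
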